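/- arXiv:1106.6008 — 3 statements merged into one kernel-verified Lean document; each statement's English description precedes it below -/
import Mathlib

section
/- Let π* be a probability measure on Ω that is a steady state for the EVP kernel. Then the PVP map T preserves the measure μ* = m ⊗ π* on Σ = [0,1) × Ω, i.e. μ*(T⁻¹A) = μ*(A) for every measurable A ⊆ Σ. -/
open MeasureTheory Filter Topology
open scoped ENNReal NNReal Classical

noncomputable section

/-- Points of the lattice `ℤ^d`. -/
abbrev Zd (d : ℕ) := Fin d → ℤ

/-- The natural embedding of `ℤ^d` into `ℝ^d`. -/
def zdR {d : ℕ} (y : Zd d) : Fin d → ℝ := fun i => (y i : ℝ)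

/-- A random environment on `ℤ^d`: a complete probability space `(Ω, Pi)`, a group
`(tau z)` of invertible measure-preserving maps indexed by `ℤ^d`, and measurable
transition probabilities `p x y : Ω → [0,1]` with total mass one and the covariance
property `p x y (tau z ω) = p (x+z) (y+z) ω`. -/
structure RandomEnv (d : ℕ) (Ω : Type*) [MeasurableSpace Ω] where
  Pi : Measure Ω
  tau : Zd d → Ω → Ω
  p : Zd d → Zd d → Ω → ℝ
  prob : IsProbabilityMeasure Pi
  complete : Pi.IsComplete
  tau_meas : ∀ z, Measurable (tau z)
  tau_mp : ∀ z, MeasurePreserving (tau z) Pi Pi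
  tau_add : ∀ z w, tau z ∘ tau w = tau (z + w)
  tau_zero : tau 0 = id
  p_meas : ∀ x y, Measurable (p x y)
  p_nonneg : ∀ x y ω, 0 ≤ p x y ω
  p_le_one : ∀ x y ω, p x y ω ≤ 1
  p_sum : ∀ x ω, HasSum (fun y => p x y ω) 1
  p_cov : ∀ x y z ω, p x y (tau z ω) = p (x + z) (y + z) ω

variable {d : ℕ} {Ω : Type*} [MeasurableSpace Ω]

/-- The EVP (environment viewed from the particle) transition kernel
`K(ω, B) = ∑_y p_{0y}(ω) 1_B (τ_y ω)`. -/
def Kker (E : RandomEnv d Ω) (ω : Ω) (B : Set Ω) : ℝ≥0∞ :=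
  ∑' y : Zd d, if E.tau y ω ∈ B then ENNReal.ofReal (E.p 0 y ω) else 0

/-- A probability measure `ν` is a steady state for the EVP kernel. -/
def IsSteady (E : RandomEnv d Ω) (ν : Measure Ω) : Prop :=
  IsProbabilityMeasure ν ∧ ∀ B : Set Ω, MeasurableSet B → ν B = ∫⁻ ω, Kker E ω B ∂ν

/-- The `n`-step transition probabilities `p^{(n)}_{xy}(ω)`. -/
def nstep (E : RandomEnv d Ω) : ℕ → Zd d → Zd d → Ω → ℝ
  | 0, x, y, _ => if x = y then 1 else 0
  | n + 1, x, y, ω => ∑' z : Zd d, E.p x z ω * nstep E n z y ω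

/-- The set `Ω_t` of transitive environments (relative to a subgroup `Γ`). -/
def transSet (E : RandomEnv d Ω) (Γ : AddSubgroup (Zd d)) : Set Ω :=
  {ω | ∀ y ∈ Γ, ∃ n : ℕ, 1 ≤ n ∧ 0 < nstep E n 0 y ω}

/-- The set `Ω_det` of environments with a deterministic jump at the origin. -/
def detSet (E : RandomEnv d Ω) : Set Ω :=
  {ω | ∃ y₀ : Zd d, ∀ y, E.p 0 y ω = if y = y₀ then 1 else 0}

/-- `P : Ω → Measure (ℕ → ℤ^d)` is the family of quenched laws `P_ω` of the random
walk in the environment `ω`, started at the origin. -/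
def IsQuenchedLaw (E : RandomEnv d Ω) (P : Ω → Measure (ℕ → Zd d)) : Prop :=
  (∀ ω, IsProbabilityMeasure (P ω)) ∧
  (∀ B : Set (ℕ → Zd d), MeasurableSet B → Measurable fun ω => P ω B) ∧
  ∀ ω, ∀ n : ℕ, ∀ w : ℕ → Zd d,
    P ω {x | ∀ k ≤ n, x k = w k}
      = ENNReal.ofReal
          ((if w 0 = 0 then (1 : ℝ) else 0) * ∏ k ∈ Finset.range n, E.p (w k) (w (k + 1)) ω)

/-- `PP` is the annealed law on `(ℤ^d)^ℕ × Ω` with environment marginal `ν`: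
`PP (A × B) = ∫_B P_ω(A) ν(dω)`. -/
def IsAnnealedLaw (P : Ω → Measure (ℕ → Zd d)) (ν : Measure Ω)
    (PP : Measure ((ℕ → Zd d) × Ω)) : Prop :=
  ∀ A : Set (ℕ → Zd d), MeasurableSet A → ∀ B : Set Ω, MeasurableSet B →
    PP (A ×ˢ B) = ∫⁻ ω in B, P ω A ∂ν

/-- Assumption (A1): no deterministic walks, a.s. w.r.t. the annealed law. -/
def A1cond (E : RandomEnv d Ω) (PP : Measure ((ℕ → Zd d) × Ω)) : Prop :=
  ∀ᵐ z ∂PP, ∃ n : ℕ, E.tau (z.1 n) z.2 ∉ detSet E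

/-- Assumption (A2), with decay exponent `d + γ`. -/
def A2cond (E : RandomEnv d Ω) (γ : ℝ) : Prop :=
  ∃ K : ℝ, 0 < K ∧ ∀ᵐ ω ∂E.Pi, ∀ x y : Zd d, x ≠ y →
    E.p x y ω ≤ K * ‖y - x‖ ^ (-((d : ℝ) + γ))

/-- Assumption (A3): ergodicity of the environment w.r.t. the translations in `Γ`. -/
def A3cond (E : RandomEnv d Ω) (Γ : AddSubgroup (Zd d)) : Prop :=
  ∀ B : Set Ω, MeasurableSet B → (∀ z ∈ Γ, E.tau z ⁻¹' B = B) →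
    E.Pi B = 0 ∨ E.Pi B = 1

/-- Assumption (A4): partial transitivity. -/
def A4cond (E : RandomEnv d Ω) (Γ : AddSubgroup (Zd d)) : Prop :=
  0 < E.Pi (transSet E Γ)

/-- Assumption (A5): existence of an absolutely continuous steady state charging
the transitive environments. -/
def A5cond (E : RandomEnv d Ω) (Γ : AddSubgroup (Zd d)) (π' : Measure Ω) : Prop :=
  π'.AbsolutelyContinuous E.Pi ∧ IsSteady E π' ∧ 0 < π' (transSet E Γ)

/-! ### The PVP dynamical system -/

/-- Partial sums `a_n(ω)` of the jump probabilities `q_i(ω) = p_{0 d_i}(ω)`,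
relative to an enumeration `e` of `ℤ^d`. -/
def aFun (E : RandomEnv d Ω) (e : ℕ ≃ Zd d) (n : ℕ) (ω : Ω) : ℝ :=
  ∑ i ∈ Finset.range n, E.p 0 (e i) ω

/-- The index `i(s,ω)` of the interval `I_i(ω) = [a_i(ω), a_{i+1}(ω))` containing `s`. -/
def idx (E : RandomEnv d Ω) (e : ℕ ≃ Zd d) (s : ℝ) (ω : Ω) : ℕ :=
  sInf {i : ℕ | s < aFun E e (i + 1) ω}

/-- The displacement function `D(s,ω) = d_{i(s,ω)}`. -/
def Dfun (E : RandomEnv d Ω) (e : ℕ ≃ Zd d) (sω : ℝ × Ω) : Zd d :=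
  e (idx E e sω.1 sω.2)

/-- The PVP map `T(s,ω) = (φ(s,ω), τ_{D(s,ω)} ω)` on `Σ = I × Ω`. -/
def Tmap (E : RandomEnv d Ω) (e : ℕ ≃ Zd d) : ℝ × Ω → ℝ × Ω :=
  fun sω =>
    ((sω.1 - aFun E e (idx E e sω.1 sω.2) sω.2) / E.p 0 (Dfun E e sω) sω.2,
      E.tau (Dfun E e sω) sω.2)

/-- The measure `m ⊗ ν` on `Σ = [0,1) × Ω` (with `m` Lebesgue measure on `[0,1)`). -/
def pvpMeasure (ν : Measure Ω) : Measure (ℝ × Ω) :=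
  (volume.restrict (Set.Ico (0 : ℝ) 1)).prod ν

/-- The random walk `X_n(s,ω) = ∑_{k<n} D(T^k(s,ω))` read off from the PVP system. -/
def Xwalk (E : RandomEnv d Ω) (e : ℕ ≃ Zd d) (n : ℕ) (sω : ℝ × Ω) : Zd d :=
  ∑ k ∈ Finset.range n, Dfun E e ((Tmap E e)^[k] sω)

/-- The point-of-view-of-the-particle map `F` on `(ℤ^d)^ℕ × Ω`. -/
def Fmap (E : RandomEnv d Ω) : (ℕ → Zd d) × Ω → (ℕ → Zd d) × Ω :=
  fun z => (fun n => z.1 (n + 1) - z.1 1, E.tau (z.1 1) z.2)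

/-- `Q` is the law on `Ω^ℕ` of the stationary EVP Markov chain with kernel `K`
and initial distribution `ν`. -/
def IsEVPLaw (E : RandomEnv d Ω) (ν : Measure Ω) (Q : Measure (ℕ → Ω)) : Prop :=
  IsProbabilityMeasure Q ∧
  Measure.map (fun f : ℕ → Ω => f 0) Q = ν ∧
  ∀ n : ℕ, ∀ A' : Set (Fin (n + 1) → Ω), MeasurableSet A' →
    ∀ C : Set Ω, MeasurableSet C →
      Q ({f | (fun k : Fin (n + 1) => f k.val) ∈ A'} ∩ {f | f (n + 1) ∈ C})
        = ∫⁻ f in {f | (fun k : Fin (n + 1) => f k.val) ∈ A'}, Kker E (f n) C ∂Q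

/-- The local drift `δ(ω) = ∑_y p_{0y}(ω) y`, viewed in `ℝ^d`. -/
def localDrift (E : RandomEnv d Ω) (ω : Ω) : Fin d → ℝ :=
  ∑' y : Zd d, E.p 0 y ω • zdR y

/-- A doubly stochastic environment: `Π`-a.s., `∑_x p_{xy}(ω) = 1` for every `y`. -/
def DoublyStochastic (E : RandomEnv d Ω) : Prop :=
  ∀ᵐ ω ∂E.Pi, ∀ y : Zd d, HasSum (fun x => E.p x y ω) 1

/-- The covariance matrix `C = ∫_Ω ∑_y p_{0y}(ω) (y ⊗ y) Π(dω)`. -/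
def covMatrix (E : RandomEnv d Ω) : Matrix (Fin d) (Fin d) ℝ :=
  fun i j => ∫ ω, (∑' y : Zd d, E.p 0 y ω * (zdR y i * zdR y j)) ∂E.Pi


/-- The conjugacy `Φ(s,ω) = ((X_n(s,ω))_n, ω)` between the PVP system and the
annealed process. -/
def PhiMap (E : RandomEnv d Ω) (e : ℕ ≃ Zd d) : ℝ × Ω → (ℕ → Zd d) × Ω :=
  fun sω => (fun n => Xwalk E e n sω, sω.2)

end

/-!
On the fibre over `ω`, the map `T` sends each interval `I_i(ω)` affinely onto `I`, stretching it
by the factor `1 / q_i(ω)`, and moves the environment to `τ_{d_i} ω`. So if `A_ω'` denotes the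
fibre of `A` over `ω'`, the fibre of `T⁻¹ A` over `ω` has Lebesgue measure
`∑_y p_{0y}(ω) m(A_{τ_y ω}) = ∫ m(A_ω') K(ω, dω')`. Integrating in `π'` and using that `π'` is
steady gives `∫ m(A_ω') dπ'(ω') = μ*(A)`.
-/

open Set

theorem measurable_nat_sInf {α : Type*} [MeasurableSpace α] {p : α → ℕ → Prop}
    (hp : ∀ n, MeasurableSet {x | p x n}) : Measurable fun x => sInf {n | p x n} := by
  refine measurable_to_countable' fun n => ?_
  have hpre : (fun x => sInf {n | p x n}) ⁻¹' {n}
      = {x | p x n ∧ ∀ m < n, ¬p x m} ∪ {x | n = 0 ∧ ∀ m, ¬p x m} := by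
    ext x
    rcases Set.eq_empty_or_nonempty {n | p x n} with hempty | hne
    · have hnot : ∀ m, ¬p x m := fun m hm => hempty.subset hm
      simp [hnot, eq_comm]
    · have hsome : ¬∀ m, ¬p x m := fun h => hne.elim h
      simp only [mem_preimage, mem_singleton_iff, mem_union, mem_ofPred_eq, hsome, and_false,
        or_false]
      constructor
      · rintro rfl
        exact ⟨Nat.sInf_mem hne, fun m hm => Nat.notMem_of_lt_sInf hm⟩
      · rintro ⟨hn, hmin⟩
        exact IsLeast.csInf_eq ⟨hn, fun m hm => not_lt.mp fun hlt => hmin m hlt hm⟩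
  rw [hpre]
  simp only [ofPred_and, ofPred_forall]
  exact ((hp n).inter (.iInter fun m => .iInter fun _ => (hp m).compl)).union
    ((MeasurableSet.const _).inter (.iInter fun m => (hp m).compl))

theorem Real.volume_Ico_inter_preimage_sub_div (a : ℝ) {q : ℝ} (hq : 0 < q) (S : Set ℝ) :
    volume (Ico a (a + q) ∩ (fun s => (s - a) / q) ⁻¹' S)
      = ENNReal.ofReal q * volume (S ∩ Ico 0 1) := by
  have hIco : Ico a (a + q) = (fun s => (s - a) / q) ⁻¹' Ico 0 1 := by
    ext s
    simp only [mem_Ico, mem_preimage, div_nonneg_iff, div_lt_one hq]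
    constructor
    · rintro ⟨h1, h2⟩; exact ⟨Or.inl ⟨by linarith, hq.le⟩, by linarith⟩
    · rintro ⟨h1 | h1, h2⟩ <;> constructor <;> linarith [h1.1, h1.2]
  have hfactor : (fun s : ℝ => (s - a) / q) = (q⁻¹ * ·) ∘ (· + -a) := by
    funext s; simp [div_eq_inv_mul, sub_eq_add_neg]
  rw [hIco, ← preimage_inter, inter_comm, hfactor, preimage_comp,
    measure_preimage_add_right, Real.volume_preimage_mul_left (inv_ne_zero hq.ne'), inv_inv,
    abs_of_pos hq]

/-- The index `i` with `s ∈ [q_0 + ⋯ + q_{i-1}, q_0 + ⋯ + q_i)`; it is `0` when there is none. -/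
noncomputable def intervalIndex (q : ℕ → ℝ) (s : ℝ) : ℕ :=
  sInf {i : ℕ | s < ∑ j ∈ Finset.range (i + 1), q j}

noncomputable def intervalMap (q : ℕ → ℝ) (s : ℝ) : ℝ :=
  (s - ∑ j ∈ Finset.range (intervalIndex q s), q j) / q (intervalIndex q s)

section IntervalPartition

variable {q : ℕ → ℝ}

theorem monotone_sum_range_of_nonneg (hq0 : ∀ i, 0 ≤ q i) :
    Monotone fun n => ∑ j ∈ Finset.range n, q j :=
  monotone_nat_of_le_succ fun n => by
    rw [Finset.sum_range_succ]
    exact le_add_of_nonneg_right (hq0 n)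

theorem sum_range_intervalIndex_le {s : ℝ} (hs : 0 ≤ s) :
    ∑ j ∈ Finset.range (intervalIndex q s), q j ≤ s := by
  rcases h : intervalIndex q s with _ | m
  · simpa using hs
  · have hm : m < intervalIndex q s := h ▸ Nat.lt_succ_self m
    exact not_lt.mp (Nat.notMem_of_lt_sInf hm)

theorem lt_sum_range_intervalIndex_succ (hq : HasSum q 1) {s : ℝ} (hs : s < 1) :
    s < ∑ j ∈ Finset.range (intervalIndex q s + 1), q j := by
  have hne : {i : ℕ | s < ∑ j ∈ Finset.range (i + 1), q j}.Nonempty :=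
    ((hq.tendsto_sum_nat.comp (tendsto_add_atTop_nat 1)).eventually_const_lt hs).exists
  exact Nat.sInf_mem hne

theorem intervalIndex_eq (hq0 : ∀ i, 0 ≤ q i) {s : ℝ} {n : ℕ}
    (hs : s ∈ Ico (∑ j ∈ Finset.range n, q j) (∑ j ∈ Finset.range (n + 1), q j)) :
    intervalIndex q s = n := by
  refine le_antisymm (Nat.sInf_le hs.2) (not_lt.mp fun hlt => ?_)
  have hmem : s < ∑ j ∈ Finset.range (intervalIndex q s + 1), q j :=
    Nat.sInf_mem (s := {i | s < ∑ j ∈ Finset.range (i + 1), q j}) ⟨n, hs.2⟩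
  exact (hmem.trans_le (monotone_sum_range_of_nonneg hq0 hlt)).not_ge hs.1

theorem setOf_intervalMap_mem_inter_Ico (hq0 : ∀ i, 0 ≤ q i) (hq : HasSum q 1)
    (S : ℕ → Set ℝ) :
    {s | intervalMap q s ∈ S (intervalIndex q s)} ∩ Ico 0 1
      = ⋃ n, Ico (∑ j ∈ Finset.range n, q j) (∑ j ∈ Finset.range (n + 1), q j) ∩
          (fun s => (s - ∑ j ∈ Finset.range n, q j) / q n) ⁻¹' S n := by
  ext s
  simp only [mem_inter_iff, mem_ofPred_eq, mem_iUnion, mem_preimage]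
  constructor
  · rintro ⟨hS, hs⟩
    exact ⟨intervalIndex q s,
      ⟨sum_range_intervalIndex_le hs.1, lt_sum_range_intervalIndex_succ hq hs.2⟩, hS⟩
  · rintro ⟨n, hs, hS⟩
    have hidx := intervalIndex_eq hq0 hs
    refine ⟨by rwa [intervalMap, hidx], ?_, ?_⟩
    · exact (Finset.sum_nonneg fun j _ => hq0 j).trans hs.1
    · exact hs.2.trans_le (sum_le_hasSum _ (fun j _ => hq0 j) hq)

theorem restrict_Ico_setOf_intervalMap_mem (hq0 : ∀ i, 0 ≤ q i) (hq : HasSum q 1)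
    {S : ℕ → Set ℝ} (hS : ∀ n, MeasurableSet (S n)) :
    volume.restrict (Ico 0 1) {s | intervalMap q s ∈ S (intervalIndex q s)}
      = ∑' n, ENNReal.ofReal (q n) * volume.restrict (Ico 0 1) (S n) := by
  have hdisj : Pairwise (Function.onFun Disjoint fun n : ℕ =>
      Ico (∑ j ∈ Finset.range n, q j) (∑ j ∈ Finset.range (n + 1), q j)) :=
    (monotone_sum_range_of_nonneg hq0).pairwise_disjoint_on_Ico_succ
  rw [Measure.restrict_apply' measurableSet_Ico, setOf_intervalMap_mem_inter_Ico hq0 hq,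
    measure_iUnion (hdisj.mono fun i j h => h.mono inter_subset_left inter_subset_left)
      fun n => measurableSet_Ico.inter
        ((by fun_prop : Measurable fun s => (s - ∑ j ∈ Finset.range n, q j) / q n) (hS n))]
  refine tsum_congr fun n => ?_
  rw [Measure.restrict_apply' measurableSet_Ico, Finset.sum_range_succ]
  rcases (hq0 n).eq_or_lt with hzero | hpos
  · simp [← hzero]
  · exact Real.volume_Ico_inter_preimage_sub_div _ hpos _

end IntervalPartition

section PVP

variable {d : ℕ} {Ω : Type*} [MeasurableSpace Ω] (E : RandomEnv d Ω)

noncomputable def evpMeasure (ω : Ω) : Measure Ω :=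
  Measure.sum fun y : Zd d => ENNReal.ofReal (E.p 0 y ω) • Measure.dirac (E.tau y ω)

theorem evpMeasure_apply (ω : Ω) {B : Set Ω} (hB : MeasurableSet B) :
    evpMeasure E ω B = Kker E ω B := by
  simp only [evpMeasure, Kker, Measure.sum_apply _ hB, Measure.smul_apply,
    Measure.dirac_apply' _ hB, smul_eq_mul, indicator_apply, Pi.one_apply, mul_ite, mul_one,
    mul_zero]

theorem measurable_Kker {B : Set Ω} (hB : MeasurableSet B) :
    Measurable fun ω => Kker E ω B :=
  Measurable.tsum fun y =>
    Measurable.ite (E.tau_meas y hB) (ENNReal.measurable_ofReal.comp (E.p_meas 0 y))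
      measurable_const

theorem measurable_evpMeasure : Measurable (evpMeasure E) :=
  Measure.measurable_of_measurable_coe _ fun B hB => by
    simp only [evpMeasure_apply E _ hB]
    exact measurable_Kker E hB

theorem lintegral_evpMeasure (ω : Ω) {g : Ω → ℝ≥0∞} (hg : Measurable g) :
    ∫⁻ x, g x ∂evpMeasure E ω = ∑' y, ENNReal.ofReal (E.p 0 y ω) * g (E.tau y ω) := by
  simp only [evpMeasure, lintegral_sum_measure, lintegral_smul_measure, lintegral_dirac' _ hg,
    smul_eq_mul]

variable {E} in
theorem IsSteady.bind_evpMeasure {ν : Measure Ω} (h : IsSteady E ν) :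
    ν.bind (evpMeasure E) = ν := by
  ext B hB
  rw [Measure.bind_apply hB (measurable_evpMeasure E).aemeasurable, h.2 B hB]
  exact lintegral_congr fun ω => evpMeasure_apply E ω hB

variable {E} in
theorem IsSteady.lintegral_tsum_eq {ν : Measure Ω} (h : IsSteady E ν) {g : Ω → ℝ≥0∞}
    (hg : Measurable g) :
    ∫⁻ ω, ∑' y, ENNReal.ofReal (E.p 0 y ω) * g (E.tau y ω) ∂ν = ∫⁻ ω, g ω ∂ν := by
  simp only [← lintegral_evpMeasure E _ hg]
  rw [← Measure.lintegral_bind (measurable_evpMeasure E).aemeasurable hg.aemeasurable,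
    h.bind_evpMeasure]

variable (e : ℕ ≃ Zd d)

/-- The paper's `q_i(ω) = p_{0 d_i}(ω)`. -/
def jumpProbs (ω : Ω) : ℕ → ℝ := fun i => E.p 0 (e i) ω

theorem hasSum_jumpProbs (ω : Ω) : HasSum (jumpProbs E e ω) 1 :=
  e.hasSum_iff.mpr (E.p_sum 0 ω)

theorem measurable_aFun (n : ℕ) : Measurable (aFun E e n) :=
  Finset.measurable_sum _ fun j _ => E.p_meas 0 (e j)

theorem measurable_idx : Measurable fun x : ℝ × Ω => idx E e x.1 x.2 :=
  measurable_nat_sInf fun i =>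
    measurableSet_lt measurable_fst ((measurable_aFun E e (i + 1)).comp measurable_snd)

theorem measurable_Tmap : Measurable (Tmap E e) := by
  let branch : (ℝ × Ω) × ℕ → ℝ × Ω := fun x =>
    ((x.1.1 - aFun E e x.2 x.1.2) / E.p 0 (e x.2) x.1.2, E.tau (e x.2) x.1.2)
  have hbranch : Measurable branch := measurable_from_prod_countable_left fun n =>
    show Measurable fun x : ℝ × Ω =>
        ((x.1 - aFun E e n x.2) / E.p 0 (e n) x.2, E.tau (e n) x.2) from
      ((measurable_fst.sub ((measurable_aFun E e n).comp measurable_snd)).div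
        ((E.p_meas 0 (e n)).comp measurable_snd)).prodMk ((E.tau_meas (e n)).comp measurable_snd)
  exact hbranch.comp (measurable_id.prodMk (measurable_idx E e))

theorem restrict_Ico_preimage_Tmap (ω : Ω) {A : Set (ℝ × Ω)} (hA : MeasurableSet A) :
    volume.restrict (Ico 0 1) ((fun s => (s, ω)) ⁻¹' (Tmap E e ⁻¹' A))
      = ∑' y, ENNReal.ofReal (E.p 0 y ω) *
          volume.restrict (Ico 0 1) ((fun t => (t, E.tau y ω)) ⁻¹' A) := by
  set S : ℕ → Set ℝ := fun n => (fun t => (t, E.tau (e n) ω)) ⁻¹' A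
  have hslice : (fun s => (s, ω)) ⁻¹' (Tmap E e ⁻¹' A)
      = {s | intervalMap (jumpProbs E e ω) s ∈ S (intervalIndex (jumpProbs E e ω) s)} := rfl
  rw [hslice, restrict_Ico_setOf_intervalMap_mem (q := jumpProbs E e ω) (S := S)
    (fun i => E.p_nonneg 0 (e i) ω) (hasSum_jumpProbs E e ω) fun _ => measurable_prodMk_right hA]
  exact e.tsum_eq fun y => ENNReal.ofReal (E.p 0 y ω) *
    volume.restrict (Ico 0 1) ((fun t => (t, E.tau y ω)) ⁻¹' A)

end PVP

theorem pvp_map_measure_preserving_general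
    {d : ℕ} {Ω : Type*} [MeasurableSpace Ω] (E : RandomEnv d Ω)
    (e : ℕ ≃ Zd d) (π' : Measure Ω) (hsteady : IsSteady E π') :
    ∀ A : Set (ℝ × Ω), MeasurableSet A →
      pvpMeasure π' (Tmap E e ⁻¹' A) = pvpMeasure π' A := by
  intro A hA
  have := hsteady.1
  rw [pvpMeasure, Measure.prod_apply_symm (measurable_Tmap E e hA), Measure.prod_apply_symm hA]
  simp only [restrict_Ico_preimage_Tmap E e _ hA]
  exact hsteady.lintegral_tsum_eq (measurable_measure_prodMk_right hA)

/-- If `π'` is a steady state for the EVP kernel, then the PVP map `T`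
preserves the measure `μ* = m ⊗ π'` on `Σ = [0,1) × Ω`. -/
theorem pvp_map_measure_preserving
    {d : ℕ} (hd : 1 ≤ d) {Ω : Type*} [MeasurableSpace Ω] (E : RandomEnv d Ω)
    (e : ℕ ≃ Zd d) (π' : Measure Ω) (hsteady : IsSteady E π') :
    ∀ A : Set (ℝ × Ω), MeasurableSet A →
      pvpMeasure π' (Tmap E e ⁻¹' A) = pvpMeasure π' A :=
  pvp_map_measure_preserving_general E e π' hsteady
end

section
/- Under assumptions (A1)–(A5), the measures Π and π* are equivalent, i.e. Π is absolutely continuous with respect to π* and π* is absolutely continuous with respect to Π. -/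
open MeasureTheory Filter Topology
open scoped ENNReal NNReal Classical

/-!
Let `A = {dπ*/dΠ > 0}`: it carries `π*`, and on `A` the measure `Π` is dominated by `π*`. Since
`π*` is a steady state, `π*(Aᶜ) = 0` forces `K(ω, Aᶜ) = 0` for `π*`-a.e., hence `Π`-a.e., `ω ∈ A`,
and by covariance of the walk the same holds for the `n`-step jumps.
The `Γ`-translates of `A ∩ Ω_t` form a `Γ`-invariant set of positive measure, so by ergodicity
they cover `Π`-almost all of `Ω`; transitivity lets the walk from `τ_y ω ∈ A ∩ Ω_t` reach `ω`,
so `ω ∈ A`. Thus `Π(Aᶜ) = 0`, i.e. `Π ≪ π*`.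
-/

namespace MeasureTheory.Measure

variable {α : Type*} [MeasurableSpace α] {μ ν : Measure α}

lemma restrict_setOf_rnDeriv_pos_absolutelyContinuous [ν.HaveLebesgueDecomposition μ]
    (hνμ : ν ≪ μ) : μ.restrict {x | 0 < ν.rnDeriv μ x} ≪ ν := by
  refine AbsolutelyContinuous.mk fun s hs hνs => ?_
  rw [← withDensity_rnDeriv_eq ν μ hνμ, withDensity_apply _ hs,
    lintegral_eq_zero_iff (measurable_rnDeriv ν μ)] at hνs
  rw [restrict_apply hs, Set.inter_comm,
    ← restrict_apply (measurableSet_lt measurable_const (measurable_rnDeriv ν μ))]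
  exact measure_mono_null (fun x (hx : 0 < ν.rnDeriv μ x) => hx.ne') (ae_iff.mp hνs)

end MeasureTheory.Measure

namespace RandomEnv

variable {d : ℕ} {Ω : Type*} [MeasurableSpace Ω] (E : RandomEnv d Ω)

lemma tau_tau (y z : Zd d) (ω : Ω) : E.tau y (E.tau z ω) = E.tau (y + z) ω :=
  congrFun (E.tau_add y z) ω

lemma ae_tau {Q : Ω → Prop} (z : Zd d) (h : ∀ᵐ ω ∂E.Pi, Q ω) :
    ∀ᵐ ω ∂E.Pi, Q (E.tau z ω) :=
  (E.tau_mp z).quasiMeasurePreserving.ae h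

end RandomEnv

section nstep

variable {d : ℕ} {Ω : Type*} [MeasurableSpace Ω] (E : RandomEnv d Ω)

lemma measurable_nstep : ∀ (n : ℕ) (x y : Zd d), Measurable (nstep E n x y)
  | 0, _, _ => measurable_const
  | n + 1, x, y => Measurable.tsum fun z => (E.p_meas x z).mul (measurable_nstep n z y)

lemma measurableSet_transSet (Γ : AddSubgroup (Zd d)) : MeasurableSet (transSet E Γ) := by
  have h : transSet E Γ
      = ⋂ y ∈ (Γ : Set (Zd d)), ⋃ n : ℕ, ⋃ _ : 1 ≤ n, {ω | 0 < nstep E n 0 y ω} := by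
    ext ω; simp [transSet]
  rw [h]
  exact .biInter (Set.to_countable _) fun y _ => .iUnion fun n => .iUnion fun _ =>
    measurableSet_lt measurable_const (measurable_nstep E n 0 y)

lemma nstep_tau : ∀ (n : ℕ) (x y z : Zd d) (ω : Ω),
    nstep E n x y (E.tau z ω) = nstep E n (x + z) (y + z) ω
  | 0, x, y, z, ω => by simp only [nstep, add_left_inj]
  | n + 1, x, y, z, ω => by
    calc nstep E (n + 1) x y (E.tau z ω)
        = ∑' w, E.p (x + z) (w + z) ω * nstep E n (w + z) (y + z) ω := by
          simp only [nstep, E.p_cov, nstep_tau n]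
      _ = nstep E (n + 1) (x + z) (y + z) ω :=
          (Equiv.addRight z).tsum_eq fun w => E.p (x + z) w ω * nstep E n w (y + z) ω

lemma exists_pos_of_nstep_succ_pos {n : ℕ} {x y : Zd d} {ω : Ω}
    (h : 0 < nstep E (n + 1) x y ω) : ∃ z, 0 < E.p x z ω ∧ 0 < nstep E n z y ω := by
  by_contra! hz
  refine h.not_ge (tsum_nonpos fun z => ?_)
  rcases (E.p_nonneg x z ω).eq_or_lt with hp | hp
  · rw [← hp, zero_mul]
  · exact mul_nonpos_of_nonneg_of_nonpos hp.le (hz z hp)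

end nstep

section absorbing

variable {d : ℕ} {Ω : Type*} [MeasurableSpace Ω] {E : RandomEnv d Ω}

variable (E) in
def IsAbsorbing (A : Set Ω) : Prop :=
  ∀ᵐ ω ∂E.Pi, ω ∈ A → ∀ y, 0 < E.p 0 y ω → E.tau y ω ∈ A

lemma IsSteady.ae_tau_mem {ν : Measure Ω} (hν : IsSteady E ν) {A : Set Ω} (hA : MeasurableSet A)
    (hνA : ν Aᶜ = 0) : ∀ᵐ ω ∂ν, ∀ y, 0 < E.p 0 y ω → E.tau y ω ∈ A := by
  have hK : Measurable fun ω => Kker E ω Aᶜ := Measurable.tsum fun y =>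
    Measurable.ite (E.tau_meas y hA.compl) (E.p_meas 0 y).ennreal_ofReal measurable_const
  filter_upwards [(lintegral_eq_zero_iff hK).mp ((hν.2 Aᶜ hA.compl).symm.trans hνA)]
    with ω hω y hy
  by_contra hyA
  have hterm := ENNReal.tsum_eq_zero.mp hω y
  rw [if_pos (show E.tau y ω ∈ Aᶜ from hyA), ENNReal.ofReal_eq_zero] at hterm
  exact hterm.not_gt hy

lemma IsAbsorbing.ae_nstep {A : Set Ω} (hA : IsAbsorbing E A) :
    ∀ᵐ ω ∂E.Pi, ω ∈ A → ∀ n y, 0 < nstep E n 0 y ω → E.tau y ω ∈ A := by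
  suffices h : ∀ n, ∀ᵐ ω ∂E.Pi, ω ∈ A → ∀ y, 0 < nstep E n 0 y ω → E.tau y ω ∈ A by
    filter_upwards [ae_all_iff.mpr h] with ω hω hωA n using hω n hωA
  intro n
  induction n with
  | zero =>
    refine ae_of_all _ fun ω hωA y hy => ?_
    obtain rfl : 0 = y := by by_contra h; simp [nstep, h] at hy
    rwa [E.tau_zero]
  | succ n ih =>
    have ih' : ∀ᵐ ω ∂E.Pi, ∀ z, E.tau z ω ∈ A →
        ∀ y, 0 < nstep E n 0 y (E.tau z ω) → E.tau y (E.tau z ω) ∈ A :=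
      ae_all_iff.mpr fun z => E.ae_tau z ih
    filter_upwards [hA, ih'] with ω hstep hrest hωA y hy
    obtain ⟨z, hpz, hnz⟩ := exists_pos_of_nstep_succ_pos E hy
    have hshift : 0 < nstep E n 0 (y - z) (E.tau z ω) := by
      rwa [nstep_tau, zero_add, sub_add_cancel]
    simpa [E.tau_tau] using hrest z (hstep hωA z hpz) (y - z) hshift

variable (E) in
def tauSaturation (Γ : AddSubgroup (Zd d)) (C : Set Ω) : Set Ω :=
  ⋃ y ∈ (Γ : Set (Zd d)), E.tau y ⁻¹' C

lemma measurableSet_tauSaturation (Γ : AddSubgroup (Zd d)) {C : Set Ω} (hC : MeasurableSet C) :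
    MeasurableSet (tauSaturation E Γ C) :=
  .biUnion (Set.to_countable _) fun y _ => E.tau_meas y hC

lemma subset_tauSaturation (Γ : AddSubgroup (Zd d)) (C : Set Ω) : C ⊆ tauSaturation E Γ C :=
  fun ω hω => Set.mem_biUnion Γ.zero_mem (by rwa [Set.mem_preimage, E.tau_zero])

lemma preimage_tauSaturation {Γ : AddSubgroup (Zd d)} (C : Set Ω) {z : Zd d} (hz : z ∈ Γ) :
    E.tau z ⁻¹' tauSaturation E Γ C = tauSaturation E Γ C := by
  ext ω
  simp only [tauSaturation, Set.mem_preimage, Set.mem_iUnion, SetLike.mem_coe, exists_prop,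
    E.tau_tau]
  constructor
  · rintro ⟨y, hy, hmem⟩
    exact ⟨y + z, Γ.add_mem hy hz, hmem⟩
  · rintro ⟨y, hy, hmem⟩
    exact ⟨y - z, Γ.sub_mem hy hz, by rwa [sub_add_cancel]⟩

lemma IsAbsorbing.ae_mem {Γ : AddSubgroup (Zd d)} (hΓ : A3cond E Γ) {A : Set Ω}
    (hAm : MeasurableSet A) (hA : IsAbsorbing E A) (hpos : E.Pi (A ∩ transSet E Γ) ≠ 0) :
    ∀ᵐ ω ∂E.Pi, ω ∈ A := by
  have := E.prob
  set B := tauSaturation E Γ (A ∩ transSet E Γ)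
  have hBm : MeasurableSet B :=
    measurableSet_tauSaturation Γ (hAm.inter (measurableSet_transSet E Γ))
  have hB : ∀ᵐ ω ∂E.Pi, ω ∈ B := by
    rcases hΓ B hBm fun z hz => preimage_tauSaturation _ hz with h | h
    · exact absurd (measure_mono_null (subset_tauSaturation Γ _) h) hpos
    · exact mem_ae_iff.mpr ((prob_compl_eq_zero_iff hBm).mpr h)
  have hA' := ae_all_iff.mpr fun y => E.ae_tau y hA.ae_nstep
  filter_upwards [hB, hA'] with ω hωB hω
  simp only [B, tauSaturation, Set.mem_iUnion, Set.mem_preimage, Set.mem_inter_iff,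
    SetLike.mem_coe, exists_prop] at hωB
  obtain ⟨y, hyΓ, hyA, hyT⟩ := hωB
  obtain ⟨n, -, hn⟩ := hyT (-y) (Γ.neg_mem hyΓ)
  simpa [E.tau_tau, E.tau_zero] using hω y hyA n (-y) hn

end absorbing

theorem steady_state_equivalent_to_Pi_general
    {d : ℕ} {Ω : Type*} [MeasurableSpace Ω] (E : RandomEnv d Ω)
    (Γ : AddSubgroup (Zd d))
    (π' : Measure Ω)
    (hA3 : A3cond E Γ) (hA5 : A5cond E Γ π') :
    π'.AbsolutelyContinuous E.Pi ∧ E.Pi.AbsolutelyContinuous π' := by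
  obtain ⟨hac, hsteady, htrans⟩ := hA5
  have := E.prob
  have := hsteady.1
  set A := {ω | 0 < π'.rnDeriv E.Pi ω}
  have hAm : MeasurableSet A := measurableSet_lt measurable_const (Measure.measurable_rnDeriv _ _)
  have hπA : π' Aᶜ = 0 := mem_ae_iff.mp (Measure.rnDeriv_pos hac)
  have hPiA : E.Pi.restrict A ≪ π' := Measure.restrict_setOf_rnDeriv_pos_absolutelyContinuous hac
  have habs : IsAbsorbing E A :=
    (ae_restrict_iff' hAm).mp (hPiA.ae_le (hsteady.ae_tau_mem hAm hπA))
  have hpos : E.Pi (A ∩ transSet E Γ) ≠ 0 := fun h0 =>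
    htrans.ne' (by rw [← measure_inter_conull hπA, Set.inter_comm]; exact hac h0)
  have hPiA_ae : ∀ᵐ ω ∂E.Pi, ω ∈ A := habs.ae_mem hA3 hAm hpos
  exact ⟨hac, Measure.restrict_eq_self_of_ae_mem hPiA_ae ▸ hPiA⟩

/-- Under (A1)-(A5), the measures `Π` and `π*` are equivalent. -/
theorem steady_state_equivalent_to_Pi
    {d : ℕ} (hd : 1 ≤ d) {Ω : Type*} [MeasurableSpace Ω] (E : RandomEnv d Ω)
    (Γ : AddSubgroup (Zd d))
    (P : Ω → Measure (ℕ → Zd d)) (hP : IsQuenchedLaw E P)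
    (PP : Measure ((ℕ → Zd d) × Ω)) (hPP : IsAnnealedLaw P E.Pi PP)
    (π' : Measure Ω)
    (hA1 : A1cond E PP) (hA2 : ∃ γ > (0 : ℝ), A2cond E γ)
    (hA3 : A3cond E Γ) (hA4 : A4cond E Γ) (hA5 : A5cond E Γ π') :
    π'.AbsolutelyContinuous E.Pi ∧ E.Pi.AbsolutelyContinuous π' :=
  steady_state_equivalent_to_Pi_general E Γ π' hA3 hA5
end

section
/- Assume (A1)–(A4) with γ > 2 in (A2), that the environment is doubly stochastic (Π-a.s. Σ_x p_{xy}(ω) = 1 for all y), and that Π-a.s. Σ_{y∈ℤ^d} p_{0y}(ω) y = 0. Let C := ∫_Ω Σ_{y∈ℤ^d} p_{0y}(ω) (y ⊗ y) Π(dω). Then C is positive definite in the directions spanned by Γ: for every v ∈ ℝ^d, if ⟨v, Cv⟩ = 0 then ⟨y, v⟩ = 0 for all y ∈ Γ. -/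
open MeasureTheory Filter Topology
open scoped ENNReal NNReal Classical

/-! Under (A2) with `γ > 2` the annealed jump law `m(y) = ∫ p_{0y} dΠ` has a finite second
moment, so `C = ∑_y m(y) y ⊗ y` and `⟨v, Cv⟩ = ∑_y m(y) ⟨y, v⟩²`. If this vanishes, then
`m(y) = 0`, i.e. `p_{0y} = 0` a.s., for every `y` with `⟨y, v⟩ ≠ 0`; by stationarity, a.s. no
jump `x → x + y` with `⟨y, v⟩ ≠ 0` is allowed anywhere. So `⟨·, v⟩` is constant along every
path of positive probability, and (A4) provides an environment in which every `y ∈ Γ` is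
reached from `0` by such a path, whence `⟨y, v⟩ = ⟨0, v⟩ = 0`. -/

open Matrix

section Lattice

variable {d : ℕ}

lemma norm_zdR (y : Zd d) : ‖zdR y‖ = ‖y‖ :=
  rfl

lemma zdR_sub (w x : Zd d) : zdR (w - x) = zdR w - zdR x := by
  ext i
  simp [zdR]

lemma norm_zdR_apply_mul_le (y : Zd d) (i j : Fin d) : ‖zdR y i * zdR y j‖ ≤ ‖y‖ ^ 2 := by
  rw [norm_mul, sq, ← norm_zdR]
  exact mul_le_mul (norm_le_pi_norm (zdR y) i) (norm_le_pi_norm (zdR y) j) (norm_nonneg _)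
    (norm_nonneg _)

lemma zdR_mem_span_basisFun (y : Zd d) :
    zdR y ∈ Submodule.span ℤ (Set.range (Pi.basisFun ℝ (Fin d))) := by
  rw [Submodule.mem_span_range_iff_exists_fun]
  exact ⟨y, by ext i; simp [zdR, Pi.single_apply]⟩

lemma Zd.summable_norm_rpow {r : ℝ} (hr : r < -d) : Summable fun y : Zd d => ‖y‖ ^ r := by
  let L := Submodule.span ℤ (Set.range (Pi.basisFun ℝ (Fin d)))
  have hL : Summable fun z : L => ‖z‖ ^ r :=
    ZLattice.summable_norm_rpow L r (by rwa [ZLattice.rank ℝ, Module.finrank_fin_fun])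
  have hinj : Function.Injective fun y : Zd d => (⟨zdR y, zdR_mem_span_basisFun y⟩ : L) := by
    intro y y' h
    ext i
    simpa [zdR] using congrFun (congrArg Subtype.val h) i
  simpa [Function.comp_def, norm_zdR] using hL.comp_injective hinj

end Lattice

namespace RandomEnv

variable {d : ℕ} {Ω : Type*} [MeasurableSpace Ω]

instance (E : RandomEnv d Ω) : IsProbabilityMeasure E.Pi := E.prob

lemma integrable_p (E : RandomEnv d Ω) (x y : Zd d) : Integrable (E.p x y) E.Pi :=
  Integrable.of_bound (E.p_meas x y).aestronglyMeasurable 1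
    (ae_of_all _ fun ω => by
      rw [Real.norm_of_nonneg (E.p_nonneg x y ω)]
      exact E.p_le_one x y ω)

noncomputable def annealedJumpProb (E : RandomEnv d Ω) (y : Zd d) : ℝ :=
  ∫ ω, E.p 0 y ω ∂E.Pi

lemma annealedJumpProb_nonneg (E : RandomEnv d Ω) (y : Zd d) : 0 ≤ E.annealedJumpProb y :=
  integral_nonneg (E.p_nonneg 0 y)

lemma annealedJumpProb_le_of_ae_p_le {E : RandomEnv d Ω} {γ K : ℝ}
    (hK : ∀ᵐ ω ∂E.Pi, ∀ x y : Zd d, x ≠ y → E.p x y ω ≤ K * ‖y - x‖ ^ (-((d : ℝ) + γ)))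
    {y : Zd d} (hy : y ≠ 0) : E.annealedJumpProb y ≤ K * ‖y‖ ^ (-((d : ℝ) + γ)) :=
  calc E.annealedJumpProb y ≤ ∫ _ω, K * ‖y‖ ^ (-((d : ℝ) + γ)) ∂E.Pi := by
        refine integral_mono_ae (E.integrable_p 0 y) (integrable_const _) ?_
        filter_upwards [hK] with ω hω
        simpa using hω 0 y (Ne.symm hy)
    _ = K * ‖y‖ ^ (-((d : ℝ) + γ)) := by simp

lemma summable_annealedJumpProb_mul_norm_sq {E : RandomEnv d Ω} {γ : ℝ} (hγ : 2 < γ)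
    (hA2 : A2cond E γ) : Summable fun y => E.annealedJumpProb y * ‖y‖ ^ 2 := by
  obtain ⟨K, hK0, hK⟩ := hA2
  have hdecay : Summable fun y : Zd d => K * ‖y‖ ^ (-((d : ℝ) + γ) + (2 : ℕ)) :=
    (Zd.summable_norm_rpow (by push_cast; linarith)).mul_left K
  refine hdecay.of_nonneg_of_le
    (fun y => mul_nonneg (E.annealedJumpProb_nonneg y) (by positivity)) fun y => ?_
  rcases eq_or_ne y 0 with rfl | hy
  · rw [norm_zero, zero_pow two_ne_zero, mul_zero]
    positivity
  · rw [Real.rpow_add_natCast (norm_ne_zero_iff.2 hy), ← mul_assoc]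
    exact mul_le_mul_of_nonneg_right (annealedJumpProb_le_of_ae_p_le hK hy) (by positivity)

lemma hasSum_covMatrix_apply {E : RandomEnv d Ω}
    (hm : Summable fun y => E.annealedJumpProb y * ‖y‖ ^ 2) (i j : Fin d) :
    HasSum (fun y => E.annealedJumpProb y * (zdR y i * zdR y j)) (covMatrix E i j) := by
  have hbound (y : Zd d) :
      E.annealedJumpProb y * ‖zdR y i * zdR y j‖ ≤ E.annealedJumpProb y * ‖y‖ ^ 2 :=
    mul_le_mul_of_nonneg_left (norm_zdR_apply_mul_le y i j) (E.annealedJumpProb_nonneg y)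
  have hsum : Summable fun y => ∫ ω, ‖E.p 0 y ω * (zdR y i * zdR y j)‖ ∂E.Pi := by
    refine hm.of_nonneg_of_le (fun y => integral_nonneg fun ω => norm_nonneg _) fun y => ?_
    simp_rw [norm_mul _ (zdR y i * zdR y j), Real.norm_of_nonneg (E.p_nonneg _ _ _),
      integral_mul_const]
    exact hbound y
  have h := integral_tsum_of_summable_integral_norm
    (fun y => (E.integrable_p 0 y).mul_const (zdR y i * zdR y j)) hsum
  simp_rw [integral_mul_const] at h
  have hC : covMatrix E i j = ∑' y, E.annealedJumpProb y * (zdR y i * zdR y j) := h.symm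
  rw [hC]
  refine (hm.of_norm_bounded fun y => ?_).hasSum
  rw [norm_mul, Real.norm_of_nonneg (E.annealedJumpProb_nonneg y)]
  exact hbound y

lemma hasSum_covMatrix_quadForm {E : RandomEnv d Ω}
    (hm : Summable fun y => E.annealedJumpProb y * ‖y‖ ^ 2) (v : Fin d → ℝ) :
    HasSum (fun y => E.annealedJumpProb y * (zdR y ⬝ᵥ v) ^ 2)
      (∑ i, ∑ j, v i * covMatrix E i j * v j) := by
  have h := hasSum_sum (s := Finset.univ) fun i _ => hasSum_sum (s := Finset.univ) fun j _ =>
    ((hasSum_covMatrix_apply hm i j).mul_left (v i)).mul_right (v j)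
  refine h.congr_fun fun y => ?_
  rw [sq, dotProduct, Finset.sum_mul_sum, Finset.mul_sum]
  refine Finset.sum_congr rfl fun i _ => ?_
  rw [Finset.mul_sum]
  refine Finset.sum_congr rfl fun j _ => ?_
  ring

lemma ae_p_eq_zero_of_annealedJumpProb_eq_zero {E : RandomEnv d Ω} {y : Zd d}
    (h : E.annealedJumpProb y = 0) : ∀ᵐ ω ∂E.Pi, E.p 0 y ω = 0 :=
  (integral_eq_zero_iff_of_nonneg (E.p_nonneg 0 y) (E.integrable_p 0 y)).1 h

lemma ae_forall_p_add_eq_zero {E : RandomEnv d Ω} {y : Zd d}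
    (h : ∀ᵐ ω ∂E.Pi, E.p 0 y ω = 0) : ∀ᵐ ω ∂E.Pi, ∀ x, E.p x (x + y) ω = 0 := by
  refine ae_all_iff.2 fun x => ?_
  filter_upwards [(E.tau_mp x).quasiMeasurePreserving.ae h] with ω hω
  rwa [E.p_cov, zero_add, add_comm] at hω

lemma ae_forall_p_add_eq_zero_of_quadForm_eq_zero {E : RandomEnv d Ω}
    (hm : Summable fun y => E.annealedJumpProb y * ‖y‖ ^ 2) {v : Fin d → ℝ}
    (hv : ∑ i, ∑ j, v i * covMatrix E i j * v j = 0) {w : Zd d} (hw : zdR w ⬝ᵥ v ≠ 0) :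
    ∀ᵐ ω ∂E.Pi, ∀ x, E.p x (x + w) ω = 0 := by
  have h := (hasSum_zero_iff_of_nonneg fun y =>
    mul_nonneg (E.annealedJumpProb_nonneg y) (sq_nonneg _)).1
    (hv ▸ hasSum_covMatrix_quadForm hm v)
  have hjump : E.annealedJumpProb w = 0 :=
    (mul_eq_zero.1 (congrFun h w)).resolve_right (pow_ne_zero 2 hw)
  exact ae_forall_p_add_eq_zero (ae_p_eq_zero_of_annealedJumpProb_eq_zero hjump)

lemma nstep_nonneg (E : RandomEnv d Ω) (n : ℕ) (x y : Zd d) (ω : Ω) :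
    0 ≤ nstep E n x y ω := by
  induction n generalizing x with
  | zero => unfold nstep; positivity
  | succ n ih => exact tsum_nonneg fun z => mul_nonneg (E.p_nonneg _ _ _) (ih z)

lemma exists_p_pos_of_nstep_succ_pos {E : RandomEnv d Ω} {n : ℕ} {x y : Zd d} {ω : Ω}
    (h : 0 < nstep E (n + 1) x y ω) : ∃ z, 0 < E.p x z ω ∧ 0 < nstep E n z y ω := by
  by_contra! hz
  refine h.not_ge (tsum_nonpos fun z => ?_)
  rcases (E.p_nonneg x z ω).eq_or_lt with hp | hp
  · rw [← hp, zero_mul]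
  · exact mul_nonpos_of_nonneg_of_nonpos hp.le (hz z hp)

lemma apply_eq_of_nstep_pos {β : Type*} {E : RandomEnv d Ω} {ω : Ω} {f : Zd d → β}
    (hf : ∀ x w, 0 < E.p x w ω → f w = f x) {n : ℕ} {x y : Zd d}
    (h : 0 < nstep E n x y ω) : f y = f x := by
  induction n generalizing x with
  | zero =>
    by_cases hxy : x = y
    · rw [hxy]
    · simp [nstep, hxy] at h
  | succ n ih =>
    obtain ⟨z, hp, hn⟩ := exists_p_pos_of_nstep_succ_pos h
    rw [ih hn, hf x z hp]

end RandomEnv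

open RandomEnv

theorem diffusion_matrix_positive_definite_on_Gamma_general
    {d : ℕ} {Ω : Type*} [MeasurableSpace Ω] (E : RandomEnv d Ω)
    (Γ : AddSubgroup (Zd d))
    (hA2 : ∃ γ > (2 : ℝ), A2cond E γ)
    (hA4 : A4cond E Γ) :
    ∀ v : Fin d → ℝ,
      (∑ i, ∑ j, v i * covMatrix E i j * v j) = 0 →
      ∀ y : Zd d, y ∈ Γ → (∑ i, zdR y i * v i) = 0 := by
  intro v hv y hy
  obtain ⟨γ, hγ, hA2⟩ := hA2
  have hm := summable_annealedJumpProb_mul_norm_sq hγ hA2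
  have hnull : ∀ w, ∀ᵐ ω ∂E.Pi, zdR w ⬝ᵥ v ≠ 0 → ∀ x, E.p x (x + w) ω = 0 := by
    intro w
    by_cases hw : zdR w ⬝ᵥ v = 0
    · exact ae_of_all _ fun _ h => absurd hw h
    · filter_upwards [ae_forall_p_add_eq_zero_of_quadForm_eq_zero hm hv hw] with ω hω
        using fun _ => hω
  have hflat : ∀ᵐ ω ∂E.Pi, ∀ x w, 0 < E.p x w ω → zdR w ⬝ᵥ v = zdR x ⬝ᵥ v := by
    filter_upwards [ae_all_iff.2 hnull] with ω hω x w hp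
    by_contra hne
    have h := hω (w - x) (by rwa [zdR_sub, sub_dotProduct, sub_ne_zero]) x
    rw [add_sub_cancel] at h
    exact hp.ne' h
  obtain ⟨ω, hω, hωflat⟩ :=
    Measure.exists_mem_of_measure_ne_zero_of_ae hA4.ne' (ae_restrict_of_ae hflat)
  obtain ⟨n, -, hn⟩ := hω y hy
  simpa [zdR, dotProduct] using apply_eq_of_nstep_pos hωflat hn

/-- Under (A1)-(A4) with `γ > 2`, double stochasticity and zero local
drift, the diffusion matrix `C` is positive definite in the directions spanned by
`Γ`: if `⟨v, Cv⟩ = 0` then `v` is orthogonal to every `y ∈ Γ`. -/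
theorem diffusion_matrix_positive_definite_on_Gamma
    {d : ℕ} (hd : 1 ≤ d) {Ω : Type*} [MeasurableSpace Ω] (E : RandomEnv d Ω)
    (Γ : AddSubgroup (Zd d))
    (P : Ω → Measure (ℕ → Zd d)) (hP : IsQuenchedLaw E P)
    (PP : Measure ((ℕ → Zd d) × Ω)) (hPP : IsAnnealedLaw P E.Pi PP)
    (hA1 : A1cond E PP) (hA2 : ∃ γ > (2 : ℝ), A2cond E γ)
    (hA3 : A3cond E Γ) (hA4 : A4cond E Γ)
    (hds : DoublyStochastic E)
    (hdrift : ∀ᵐ ω ∂E.Pi, HasSum (fun y : Zd d => E.p 0 y ω • zdR y) 0) :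
    ∀ v : Fin d → ℝ,
      (∑ i, ∑ j, v i * covMatrix E i j * v j) = 0 →
      ∀ y : Zd d, y ∈ Γ → (∑ i, zdR y i * v i) = 0 :=
  diffusion_matrix_positive_definite_on_Gamma_general E Γ hA2 hA4
end
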